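/- Lemma 3.3 (evaluation of Y + Y^{−1}): for every Laurent polynomial f ∈ F[U,U^{−1}] and every integer N ≥ 1, ((𝒴 + 𝒴′)f)(−q^{2N}) = −(t₁ q^{−2N} + t₁^{−1} q^{2N}) f(−q^{2N}) + t̄₁ ∑_{p=0}^{N−1} {2p} f(−q^{2(2p−N)}) − t̄₂ ∑_{p=0}^{N−1} {2p+1} f(−q^{2(2p−N+1)}), where g(c) denotes the evaluation of g ∈ F[U,U^{−1}] at U = c. -/

import Mathlib

/-! Both sides are linear in `f`, so it suffices to take `f = U^k`. Put `x = q^{2N}`,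
`a = q^{2k+1}` and `b = q^{2k-1}`. The monomial `U^k` takes the value `q^{2mk} / (-x)^k` at
`-q^{2(m-N)}`, so the two sums on the right combine into
`(t̄₁ Σ (a^{2p} - b^{2p}) - t̄₂ Σ (a^{2p+1} - b^{2p+1})) / (-x)^k`, a difference of geometric
series in `a²` and `b²`. As `a^{2N} = x (-x)^{2k}` and `b^{2N} = x⁻¹ (-x)^{2k}`, the `b`-series sums
to the term `a_k (c^{k-1} + c^{-k})` of `𝒴`, whose denominator is `1 - b²`, and the `a`-series to
the terms `a_{-k} (c^{k+1} + c^{-k})` and `t̄₁ c^{-k}` of `𝒴′`, where `c = -x`. The denominators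
`1 - q^{4k ∓ 2}` do not vanish because `q` is not a root of unity. -/

noncomputable section

open LaurentPolynomial

/-- The field `F = ℚ(q, t₁, t₂)` of rational functions in three indeterminates. -/
abbrev F : Type := FractionRing (MvPolynomial (Fin 3) ℚ)

def q : F := algebraMap (MvPolynomial (Fin 3) ℚ) F (MvPolynomial.X 0)
def t1 : F := algebraMap (MvPolynomial (Fin 3) ℚ) F (MvPolynomial.X 1)
def t2 : F := algebraMap (MvPolynomial (Fin 3) ℚ) F (MvPolynomial.X 2)

/-- `a_k = (t̄₁ − t̄₂ q^{2k−1})/(1 − q^{4k−2})`. -/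
def aop (k : ℤ) : F :=
  ((t1 - t1⁻¹) - (t2 - t2⁻¹) * q ^ (2 * k - 1)) / (1 - q ^ (4 * k - 2))

/-- Evaluation of a Laurent polynomial `f ∈ F[U,U⁻¹]` at a point `c ∈ F`
(sending the monomial `U^k` to `c^k`). -/
def evalL (c : F) (f : LaurentPolynomial F) : F := Finsupp.sum f.coeff fun k r => r * c ^ k

section Field

variable {K : Type*} [Field K]

lemma zpow_sub_zpow_neg_mul_neg_zpow_eq_div {q : K} (hq : q ≠ 0) (m N k : ℤ) :
    (q ^ m - q ^ (-m)) * (-q ^ (2 * (m - N))) ^ k =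
      ((q ^ (2 * k + 1)) ^ m - (q ^ (2 * k - 1)) ^ m) / (-q ^ (2 * N)) ^ k := by
  rw [eq_div_iff (zpow_ne_zero _ (neg_ne_zero.2 (zpow_ne_zero _ hq))), mul_assoc, ← mul_zpow,
    neg_mul_neg, ← zpow_add₀ hq, ← zpow_mul, ← zpow_mul, ← zpow_mul, sub_mul, ← zpow_add₀ hq,
    ← zpow_add₀ hq]
  congr 2 <;> ring

lemma zpow_two_mul_add_pow_two_mul {q : K} (hq : q ≠ 0) (k e : ℤ) (N : ℕ) :
    (q ^ (2 * k + e)) ^ (2 * N) = (q ^ (2 * (N : ℤ))) ^ e * ((-q ^ (2 * (N : ℤ))) ^ k) ^ 2 := by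
  have hsq : ((-q ^ (2 * (N : ℤ))) ^ k) ^ 2 = ((q ^ (2 * (N : ℤ))) ^ 2) ^ k := by
    rw [sq, sq, ← mul_zpow, neg_mul_neg]
  rw [hsq]
  simp only [← zpow_natCast, ← zpow_mul, ← zpow_add₀ hq]
  congr 1; push_cast; ring

lemma sum_range_mul_pow_sub_mul_pow_succ {a : K} (ha : a ^ 2 ≠ 1) (s t : K) (N : ℕ) :
    ∑ p ∈ Finset.range N, (s * a ^ (2 * p) - t * a ^ (2 * p + 1)) =
      (s - t * a) * (a ^ (2 * N) - 1) / (a ^ 2 - 1) := by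
  have : ∀ p : ℕ, s * a ^ (2 * p) - t * a ^ (2 * p + 1) = (s - t * a) * (a ^ 2) ^ p := by
    intro p; rw [← pow_mul]; ring
  simp_rw [this, ← Finset.mul_sum, geom_sum_eq ha, ← pow_mul, mul_div_assoc]

/-- With `a = q^{2k+1}`, `b = q^{2k-1}`, `x = q^{2N}`, `C = (-x)^k`, `s = t₁⁻¹` and `u = t̄₂`,
this is the evaluation of `(𝒴 + 𝒴′) U^k` at `-x`. -/
lemma monomial_eval_identity (t s u x C a b : K) (N : ℕ) (hx : x ≠ 0) (ha : a ≠ 0)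
    (ha2 : a ^ 2 ≠ 1) (hb2 : b ^ 2 ≠ 1) (haN : a ^ (2 * N) = x * C ^ 2)
    (hbN : b ^ (2 * N) = x⁻¹ * C ^ 2) :
    t * (C / -x) - (t - s - u * b) / (1 - b ^ 2) * (C / -x + C⁻¹) +
      (t * (C * -x) - (t - s - u * a⁻¹) / (1 - a⁻¹ ^ 2) * (C * -x + C⁻¹) + (t - s) * C⁻¹) =
    -(t * x⁻¹ + s * x) * C + (t - s) * ∑ p ∈ Finset.range N, (a ^ (2 * p) - b ^ (2 * p)) / C
      - u * ∑ p ∈ Finset.range N, (a ^ (2 * p + 1) - b ^ (2 * p + 1)) / C := by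
  have hsum : (t - s) * ∑ p ∈ Finset.range N, (a ^ (2 * p) - b ^ (2 * p)) / C
      - u * ∑ p ∈ Finset.range N, (a ^ (2 * p + 1) - b ^ (2 * p + 1)) / C =
      ((t - s - u * a) * (a ^ (2 * N) - 1) / (a ^ 2 - 1)
        - (t - s - u * b) * (b ^ (2 * N) - 1) / (b ^ 2 - 1)) / C := by
    rw [← sum_range_mul_pow_sub_mul_pow_succ ha2, ← sum_range_mul_pow_sub_mul_pow_succ hb2,
      ← Finset.sum_sub_distrib, Finset.sum_div, Finset.mul_sum, Finset.mul_sum,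
      ← Finset.sum_sub_distrib]
    exact Finset.sum_congr rfl fun p _ => by ring
  rw [add_sub_assoc, hsum, haN, hbN]
  field_simp
  ring

end Field

def evalLinear (c : F) : LaurentPolynomial F →ₗ[F] F :=
  (Finsupp.linearCombination F fun k : ℤ => c ^ k).comp
    (AddMonoidAlgebra.coeffLinearEquiv F).toLinearMap

lemma evalLinear_apply (c : F) (f : LaurentPolynomial F) : evalLinear c f = evalL c f := rfl

lemma evalL_add (c : F) (f g : LaurentPolynomial F) : evalL c (f + g) = evalL c f + evalL c g :=
  map_add (evalLinear c) f g

lemma evalL_sub (c : F) (f g : LaurentPolynomial F) : evalL c (f - g) = evalL c f - evalL c g :=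
  map_sub (evalLinear c) f g

lemma evalL_smul (c r : F) (f : LaurentPolynomial F) : evalL c (r • f) = r * evalL c f :=
  map_smul (evalLinear c) r f

lemma evalL_T (c : F) (k : ℤ) : evalL c (T k) = c ^ k := by
  rw [← evalLinear_apply]
  exact (Finsupp.linearCombination_single F 1 k).trans (one_smul F _)

lemma aop_eq (k : ℤ) :
    aop k = ((t1 - t1⁻¹) - (t2 - t2⁻¹) * q ^ (2 * k - 1)) / (1 - (q ^ (2 * k - 1)) ^ 2) := by
  rw [aop, ← zpow_natCast, ← zpow_mul]
  ring_nf

lemma q_ne_zero : q ≠ 0 := by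
  rw [q, Ne, IsFractionRing.to_map_eq_zero_iff]
  exact MvPolynomial.X_ne_zero 0

lemma q_pow_ne_one {n : ℕ} (hn : n ≠ 0) : q ^ n ≠ 1 := by
  rw [q, ← map_pow, ← map_one (algebraMap (MvPolynomial (Fin 3) ℚ) F),
    (IsFractionRing.injective (MvPolynomial (Fin 3) ℚ) F).ne_iff]
  intro h
  have h2 := congrArg (MvPolynomial.eval fun _ => (2 : ℚ)) h
  simp only [map_pow, MvPolynomial.eval_X, map_one] at h2
  exact (one_lt_pow₀ one_lt_two hn).ne' h2

lemma q_zpow_ne_one {m : ℤ} (hm : m ≠ 0) : q ^ m ≠ 1 := by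
  obtain ⟨n, rfl | rfl⟩ := Int.eq_nat_or_neg m
  · rw [zpow_natCast]; exact q_pow_ne_one (by omega)
  · rw [zpow_neg, inv_ne_one, zpow_natCast]; exact q_pow_ne_one (by omega)

lemma evalL_Y_add_Y'_T (Y Y' : Module.End F (LaurentPolynomial F))
    (hY : ∀ k : ℤ, Y (T k) = t1 • T (k - 1) - aop k • (T (k - 1) + T (-k)))
    (hY' : ∀ k : ℤ, Y' (T k) =
      t1 • T (k + 1) - aop (-k) • (T (k + 1) + T (-k)) + (t1 - t1⁻¹) • T (-k))
    (N : ℕ) (k : ℤ) :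
    evalL (-(q ^ (2 * (N : ℤ)))) ((Y + Y') (T k)) =
      -(t1 * q ^ (-(2 * (N : ℤ))) + t1⁻¹ * q ^ (2 * (N : ℤ))) * evalL (-(q ^ (2 * (N : ℤ)))) (T k)
      + (t1 - t1⁻¹) * ∑ p ∈ Finset.range N,
          (q ^ (2 * (p : ℤ)) - q ^ (-(2 * (p : ℤ)))) *
            evalL (-(q ^ (2 * (2 * (p : ℤ) - (N : ℤ))))) (T k)
      - (t2 - t2⁻¹) * ∑ p ∈ Finset.range N,
          (q ^ (2 * (p : ℤ) + 1) - q ^ (-(2 * (p : ℤ) + 1))) *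
            evalL (-(q ^ (2 * (2 * (p : ℤ) - (N : ℤ) + 1)))) (T k) := by
  set x := q ^ (2 * (N : ℤ)) with hx_def
  set a := q ^ (2 * k + 1) with ha_def
  set b := q ^ (2 * k - 1) with hb_def
  have hx : x ≠ 0 := zpow_ne_zero _ q_ne_zero
  have ha : a ≠ 0 := zpow_ne_zero _ q_ne_zero
  have ha2 : a ^ 2 ≠ 1 := by rw [← zpow_natCast, ← zpow_mul]; exact q_zpow_ne_one (by omega)
  have hb2 : b ^ 2 ≠ 1 := by rw [← zpow_natCast, ← zpow_mul]; exact q_zpow_ne_one (by omega)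
  have haN : a ^ (2 * N) = x * ((-x) ^ k) ^ 2 := by
    rw [ha_def, zpow_two_mul_add_pow_two_mul q_ne_zero, zpow_one]
  have hbN : b ^ (2 * N) = x⁻¹ * ((-x) ^ k) ^ 2 := by
    rw [hb_def, sub_eq_add_neg, zpow_two_mul_add_pow_two_mul q_ne_zero, zpow_neg_one]
  have ha_inv : q ^ (2 * -k - 1) = a⁻¹ := by rw [ha_def, ← zpow_neg]; ring_nf
  have heven : ∀ p : ℕ, (q ^ (2 * (p : ℤ)) - q ^ (-(2 * (p : ℤ)))) *
      evalL (-(q ^ (2 * (2 * (p : ℤ) - (N : ℤ))))) (T k) =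
        (a ^ (2 * p) - b ^ (2 * p)) / (-x) ^ k := by
    intro p
    rw [evalL_T, zpow_sub_zpow_neg_mul_neg_zpow_eq_div q_ne_zero]
    norm_cast
  have hodd : ∀ p : ℕ, (q ^ (2 * (p : ℤ) + 1) - q ^ (-(2 * (p : ℤ) + 1))) *
      evalL (-(q ^ (2 * (2 * (p : ℤ) - (N : ℤ) + 1)))) (T k) =
        (a ^ (2 * p + 1) - b ^ (2 * p + 1)) / (-x) ^ k := by
    intro p
    rw [evalL_T, show 2 * (p : ℤ) - N + 1 = (2 * p + 1) - N by ring,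
      zpow_sub_zpow_neg_mul_neg_zpow_eq_div q_ne_zero]
    norm_cast
  rw [Finset.sum_congr rfl fun p _ => heven p, Finset.sum_congr rfl fun p _ => hodd p]
  have hx' : -x ≠ 0 := neg_ne_zero.2 hx
  simp only [LinearMap.add_apply, hY, hY', evalL_add, evalL_sub, evalL_smul, evalL_T, aop_eq,
    ← hb_def, ha_inv, zpow_neg, ← hx_def, zpow_sub_one₀ hx', zpow_add_one₀ hx']
  linear_combination monomial_eval_identity t1 t1⁻¹ (t2 - t2⁻¹) x _ a b N hx ha ha2 hb2
    haN hbN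

theorem evaluation_formula_Y_plus_Yinv_general
    (Y Y' : Module.End F (LaurentPolynomial F))
    (hY : ∀ k : ℤ, Y (T k) = t1 • T (k - 1) - aop k • (T (k - 1) + T (-k)))
    (hY' : ∀ k : ℤ, Y' (T k) =
      t1 • T (k + 1) - aop (-k) • (T (k + 1) + T (-k)) + (t1 - t1⁻¹) • T (-k))
    (f : LaurentPolynomial F) (N : ℕ) :
    evalL (-(q ^ (2 * (N : ℤ)))) ((Y + Y') f) =
      -(t1 * q ^ (-(2 * (N : ℤ))) + t1⁻¹ * q ^ (2 * (N : ℤ))) * evalL (-(q ^ (2 * (N : ℤ)))) f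
      + (t1 - t1⁻¹) * ∑ p ∈ Finset.range N,
          (q ^ (2 * (p : ℤ)) - q ^ (-(2 * (p : ℤ)))) *
            evalL (-(q ^ (2 * (2 * (p : ℤ) - (N : ℤ))))) f
      - (t2 - t2⁻¹) * ∑ p ∈ Finset.range N,
          (q ^ (2 * (p : ℤ) + 1) - q ^ (-(2 * (p : ℤ) + 1))) *
            evalL (-(q ^ (2 * (2 * (p : ℤ) - (N : ℤ) + 1)))) f := by
  induction f using LaurentPolynomial.induction_on' with
  | add f g hf hg =>
    simp only [map_add, evalL_add, mul_add, Finset.sum_add_distrib, hf, hg]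
    ring
  | C_mul_T k r =>
    simp only [← smul_eq_C_mul, map_smul, evalL_smul, mul_left_comm _ r, ← Finset.mul_sum,
      evalL_Y_add_Y'_T Y Y' hY hY' N k]
    ring

theorem evaluation_formula_Y_plus_Yinv
    (Y Y' : Module.End F (LaurentPolynomial F))
    (hY : ∀ k : ℤ, Y (T k) = t1 • T (k - 1) - aop k • (T (k - 1) + T (-k)))
    (hY' : ∀ k : ℤ, Y' (T k) =
      t1 • T (k + 1) - aop (-k) • (T (k + 1) + T (-k)) + (t1 - t1⁻¹) • T (-k))
    (f : LaurentPolynomial F) (N : ℕ) (hN : 1 ≤ N) :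
    evalL (-(q ^ (2 * (N : ℤ)))) ((Y + Y') f) =
      -(t1 * q ^ (-(2 * (N : ℤ))) + t1⁻¹ * q ^ (2 * (N : ℤ))) * evalL (-(q ^ (2 * (N : ℤ)))) f
      + (t1 - t1⁻¹) * ∑ p ∈ Finset.range N,
          (q ^ (2 * (p : ℤ)) - q ^ (-(2 * (p : ℤ)))) *
            evalL (-(q ^ (2 * (2 * (p : ℤ) - (N : ℤ))))) f
      - (t2 - t2⁻¹) * ∑ p ∈ Finset.range N,
          (q ^ (2 * (p : ℤ) + 1) - q ^ (-(2 * (p : ℤ) + 1))) *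
            evalL (-(q ^ (2 * (2 * (p : ℤ) - (N : ℤ) + 1)))) f :=
  evaluation_formula_Y_plus_Yinv_general Y Y' hY hY' f N

end
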